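/- arXiv:2108.12278 — 2 statements merged into one kernel-verified Lean document; each statement's English description precedes it below -/
import Mathlib

section
/- For any classifier h ∈ H, any target probability measure μ on X with true labeling function f* : X → Y, any source probability measure ν on X with labeling function g : X → Y, any h_i ∈ H minimizing the risk R(·, μ, f*) over H, and any h̃ ∈ H minimizing the risk R(·, ν, g) over H, the target risk satisfies R(h, μ, f*) ≤ R'(h, h̃, ν) + Ψ(μ, ν) + σ, where the optimal combined error is σ = R'(f*, h_i, μ) + R'(h_i, h̃, ν). -/
/-!
The target risk is routed through `hᵢ`: the triangle inequality
for `τ` gives `R(h) ≤ R'(h, hᵢ, μ) + R'(hᵢ, f*, μ)`; since `h, hᵢ ∈ H`, the discrepancy moves the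
first term from `μ` to `ν`; a second triangle inequality, through `h̃`, splits `R'(h, hᵢ, ν)`.
-/

open MeasureTheory Finset

/-- `R'(f, g, μ) = ∫ τ(f(x), g(x)) dμ(x)`. -/
noncomputable def Rp {X Y : Type*} [MeasurableSpace X] (τ : Y → Y → ℝ)
    (f g : X → Y) (μ : Measure X) : ℝ := ∫ x, τ (f x) (g x) ∂μ

/-- Discrepancy distance `Ψ(μ, ν)` w.r.t. loss `τ` and hypothesis class `H`. -/
noncomputable def disc {X Y : Type*} [MeasurableSpace X] (τ : Y → Y → ℝ)
    (H : Set (X → Y)) (μ ν : Measure X) : ℝ :=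
  sSup {r : ℝ | ∃ h ∈ H, ∃ h' ∈ H,
    r = |(∫ x, τ (h' x) (h x) ∂μ) - ∫ x, τ (h' x) (h x) ∂ν|}

section Loss

variable {X Y : Type*} [MeasurableSpace X] {τ : Y → Y → ℝ} {M : ℝ} {μ ν : Measure X}
  {f g k : X → Y}

theorem integrable_loss_of_measurable [IsFiniteMeasure μ] (hτ0 : ∀ y y', 0 ≤ τ y y')
    (hτM : ∀ y y', τ y y' ≤ M) (hm : Measurable fun x => τ (f x) (g x)) :
    Integrable (fun x => τ (f x) (g x)) μ :=
  .of_bound hm.aestronglyMeasurable M <| ae_of_all _ fun x => by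
    rw [Real.norm_of_nonneg (hτ0 _ _)]
    exact hτM _ _

theorem Rp_comm (hsym : ∀ y y', τ y y' = τ y' y) : Rp τ f g μ = Rp τ g f μ := by
  simp only [Rp, hsym (f _)]

theorem Rp_nonneg (hτ0 : ∀ y y', 0 ≤ τ y y') : 0 ≤ Rp τ f g μ :=
  integral_nonneg fun _ => hτ0 _ _

theorem Rp_le_of_forall_le [IsProbabilityMeasure μ] (hτ0 : ∀ y y', 0 ≤ τ y y')
    (hτM : ∀ y y', τ y y' ≤ M) : Rp τ f g μ ≤ M := by
  have h := norm_integral_le_of_norm_le_const (μ := μ) (f := fun x => τ (f x) (g x)) (C := M) <|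
    ae_of_all _ fun x => by rw [Real.norm_of_nonneg (hτ0 _ _)]; exact hτM _ _
  rw [probReal_univ, mul_one] at h
  exact (le_abs_self _).trans h

theorem Rp_le_Rp_add_Rp (hτ0 : ∀ y y', 0 ≤ τ y y')
    (htri : ∀ y y' y'', τ y y'' ≤ τ y y' + τ y' y'')
    (hfg : Integrable (fun x => τ (f x) (g x)) μ) (hgk : Integrable (fun x => τ (g x) (k x)) μ) :
    Rp τ f k μ ≤ Rp τ f g μ + Rp τ g k μ := by
  rw [Rp, Rp, Rp, ← integral_add hfg hgk]
  exact integral_mono_of_nonneg (ae_of_all _ fun _ => hτ0 _ _) (hfg.add hgk)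
    (ae_of_all _ fun _ => htri _ _ _)

theorem abs_Rp_sub_Rp_le_disc [IsProbabilityMeasure μ] [IsProbabilityMeasure ν]
    (hτ0 : ∀ y y', 0 ≤ τ y y') (hτM : ∀ y y', τ y y' ≤ M) {H : Set (X → Y)}
    (hf : f ∈ H) (hg : g ∈ H) : |Rp τ f g μ - Rp τ f g ν| ≤ disc τ H μ ν := by
  refine le_csSup ⟨M, ?_⟩ ⟨g, hg, f, hf, rfl⟩
  rintro r ⟨g', -, f', -, rfl⟩
  exact abs_sub_le_of_nonneg_of_le (Rp_nonneg hτ0) (Rp_le_of_forall_le hτ0 hτM)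
    (Rp_nonneg hτ0) (Rp_le_of_forall_le hτ0 hτM)

end Loss

theorem target_risk_bound_general {X Y : Type*} [MeasurableSpace X]
    (τ : Y → Y → ℝ) (M' : ℝ)
    (hbd : ∀ y y' : Y, 0 ≤ τ y y' ∧ τ y y' ≤ M')
    (hsym : ∀ y y' : Y, τ y y' = τ y' y)
    (htri : ∀ y y' y'' : Y, τ y y'' ≤ τ y y' + τ y' y'')
    (H : Set (X → Y))
    (μ ν : Measure X) [IsProbabilityMeasure μ] [IsProbabilityMeasure ν]
    (fstar gl : X → Y)
    (hMeas : ∀ f ∈ H ∪ {fstar, gl}, ∀ g ∈ H ∪ {fstar, gl},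
      Measurable fun x => τ (f x) (g x))
    (h hi htil : X → Y) (hhH : h ∈ H) (hiH : hi ∈ H) (htilH : htil ∈ H) :
    Rp τ h fstar μ ≤
      Rp τ h htil ν + disc τ H μ ν + (Rp τ fstar hi μ + Rp τ hi htil ν) := by
  have hτ0 : ∀ y y', 0 ≤ τ y y' := fun y y' => (hbd y y').1
  have hτM : ∀ y y', τ y y' ≤ M' := fun y y' => (hbd y y').2
  have hint : ∀ (m : Measure X) [IsProbabilityMeasure m], ∀ f ∈ H ∪ {fstar, gl},
      ∀ g ∈ H ∪ {fstar, gl}, Integrable (fun x => τ (f x) (g x)) m :=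
    fun m _ f hf g hg => integrable_loss_of_measurable hτ0 hτM (hMeas f hf g hg)
  have hμ : Rp τ h fstar μ ≤ Rp τ h hi μ + Rp τ fstar hi μ := by
    rw [Rp_comm hsym (f := fstar)]
    exact Rp_le_Rp_add_Rp hτ0 htri (hint μ _ (.inl hhH) _ (.inl hiH))
      (hint μ _ (.inl hiH) _ (.inr (.inl rfl)))
  have hshift : Rp τ h hi μ ≤ Rp τ h hi ν + disc τ H μ ν :=
    sub_le_iff_le_add'.mp <| le_of_abs_le <| abs_Rp_sub_Rp_le_disc hτ0 hτM hhH hiH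
  have hν : Rp τ h hi ν ≤ Rp τ h htil ν + Rp τ hi htil ν := by
    rw [Rp_comm hsym (f := hi)]
    exact Rp_le_Rp_add_Rp hτ0 htri (hint ν _ (.inl hhH) _ (.inl htilH))
      (hint ν _ (.inl htilH) _ (.inl hiH))
  linarith

/-- Theorem 1: target-risk bound via discrepancy and optimal combined error. -/
theorem target_risk_bound {X Y : Type*} [MeasurableSpace X]
    (τ : Y → Y → ℝ) (M' : ℝ) (hM : 0 < M')
    (hbd : ∀ y y' : Y, 0 ≤ τ y y' ∧ τ y y' ≤ M')
    (hsym : ∀ y y' : Y, τ y y' = τ y' y)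
    (htri : ∀ y y' y'' : Y, τ y y'' ≤ τ y y' + τ y' y'')
    (H : Set (X → Y)) (hH : H.Nonempty)
    (μ ν : Measure X) [IsProbabilityMeasure μ] [IsProbabilityMeasure ν]
    (fstar gl : X → Y)
    (hMeas : ∀ f ∈ H ∪ {fstar, gl}, ∀ g ∈ H ∪ {fstar, gl},
      Measurable fun x => τ (f x) (g x))
    (h hi htil : X → Y) (hhH : h ∈ H) (hiH : hi ∈ H) (htilH : htil ∈ H)
    (hiMin : ∀ h' ∈ H, Rp τ hi fstar μ ≤ Rp τ h' fstar μ)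
    (htilMin : ∀ h' ∈ H, Rp τ htil gl ν ≤ Rp τ h' gl ν) :
    Rp τ h fstar μ ≤
      Rp τ h htil ν + disc τ H μ ν + (Rp τ fstar hi μ + Rp τ hi htil ν) :=
  target_risk_bound_general τ M' hbd hsym htri H μ ν fstar gl hMeas h hi htil hhH hiH htilH
end

section
/- Fix a classifier h ∈ H and t ≥ 1, and for each task i ∈ {1, …, t} fix a chain of probability measures μ_i^{(0)}, μ_i^{(1)}, …, μ_i^{(t−i+1)} on X with labeling functions f_i^{(k)} : X → Y and hypotheses h_i^{(k)} ∈ H for 0 ≤ k ≤ t−i+1, and set σ_{i,k} = R'(h_i^{(k)}, f_i^{(k)}, μ_i^{(k)}) + R'(h_i^{(k)}, h_i^{(k+1)}, μ_i^{(k+1)}). Define the single-model bound R_single = Σ_{i=1}^{t} [ R'(h, h_i^{(t−i+1)}, μ_i^{(t−i+1)}) + Σ_{k=0}^{t−i} ( Ψ(μ_i^{(k)}, μ_i^{(k+1)}) + σ_{i,k} ) ], and, for any choice of truncation points m_i ∈ {1, …, t−i+1} for each task i (m_i = 1 for tasks trained only once, m_i = b̂_i ≤ t−i+1 for tasks retrained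 b̂_i − 1 times), define the mixture bound R_mixture = Σ_{i=1}^{t} [ R'(h, h_i^{(m_i)}, μ_i^{(m_i)}) + Σ_{k=0}^{m_i−1} ( Ψ(μ_i^{(k)}, μ_i^{(k+1)}) + σ_{i,k} ) ]. Then R_mixture ≤ R_single. -/
open MeasureTheory Finset

/-!
For each task the single-model bound is the mixture bound with the chain continued past `m i`,
so it suffices that continuing the chain by one step never lowers the bound. That is the
one-step estimate `R'(h, hₖ, μₖ) ≤ R'(h, hₖ₊₁, μₖ₊₁) + Ψ(μₖ, μₖ₊₁) + σₖ`: move from `μₖ` to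
`μₖ₊₁` at the price of the discrepancy, then replace `hₖ` by `hₖ₊₁` by the triangle
inequality, and discard the nonnegative term `R'(hₖ, fₖ, μₖ)` of `σₖ`.
-/

theorem add_sum_range_le_of_le_add (a T : ℕ → ℝ) {m n : ℕ}
    (hstep : ∀ k < n, a k ≤ a (k + 1) + T k) (hmn : m ≤ n) :
    a m + ∑ k ∈ range m, T k ≤ a n + ∑ k ∈ range n, T k := by
  induction n, hmn using Nat.le_induction with
  | base => exact le_rfl
  | succ n hmn ih =>
    rw [sum_range_succ]
    linarith [ih fun k hk => hstep k (by omega), hstep n n.lt_succ_self]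

section Loss

variable {X Y : Type*} [MeasurableSpace X] {τ : Y → Y → ℝ} {M' : ℝ}

theorem norm_loss_le (hbd : ∀ y y' : Y, 0 ≤ τ y y' ∧ τ y y' ≤ M') (y y' : Y) :
    ‖τ y y'‖ ≤ M' := by
  rw [Real.norm_eq_abs, abs_of_nonneg (hbd y y').1]
  exact (hbd y y').2

theorem abs_integral_loss_le (hbd : ∀ y y' : Y, 0 ≤ τ y y' ∧ τ y y' ≤ M')
    (μ : Measure X) [IsProbabilityMeasure μ] (p q : X → Y) :
    |∫ x, τ (p x) (q x) ∂μ| ≤ M' := by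
  simpa using norm_integral_le_of_norm_le_const (μ := μ) (f := fun x => τ (p x) (q x))
    (ae_of_all _ fun x => norm_loss_le hbd (p x) (q x))

theorem integrable_loss (hbd : ∀ y y' : Y, 0 ≤ τ y y' ∧ τ y y' ≤ M')
    {μ : Measure X} [IsFiniteMeasure μ] {p q : X → Y}
    (hmeas : Measurable fun x => τ (p x) (q x)) :
    Integrable (fun x => τ (p x) (q x)) μ :=
  .of_bound hmeas.aestronglyMeasurable M' <| ae_of_all _ fun x => norm_loss_le hbd (p x) (q x)

theorem Rp_nonneg_s5 (hτ : ∀ y y' : Y, 0 ≤ τ y y') (p q : X → Y) (μ : Measure X) :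
    0 ≤ Rp τ p q μ :=
  integral_nonneg fun _ => hτ _ _

theorem Rp_le_Rp_add_Rp_s5 (hsym : ∀ y y' : Y, τ y y' = τ y' y)
    (htri : ∀ y y' y'' : Y, τ y y'' ≤ τ y y' + τ y' y'')
    {μ : Measure X} {p q r : X → Y}
    (hpq : Integrable (fun x => τ (p x) (q x)) μ) (hpr : Integrable (fun x => τ (p x) (r x)) μ)
    (hqr : Integrable (fun x => τ (q x) (r x)) μ) :
    Rp τ p q μ ≤ Rp τ p r μ + Rp τ q r μ := by
  rw [Rp, Rp, Rp, ← integral_add hpr hqr]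
  exact integral_mono hpq (hpr.add hqr) fun x => hsym (q x) (r x) ▸ htri _ _ _

theorem abs_integral_sub_le_disc (hbd : ∀ y y' : Y, 0 ≤ τ y y' ∧ τ y y' ≤ M')
    {H : Set (X → Y)} (μ ν : Measure X) [IsProbabilityMeasure μ] [IsProbabilityMeasure ν]
    {p q : X → Y} (hp : p ∈ H) (hq : q ∈ H) :
    |(∫ x, τ (p x) (q x) ∂μ) - ∫ x, τ (p x) (q x) ∂ν| ≤ disc τ H μ ν := by
  refine le_csSup ⟨M' + M', ?_⟩ ⟨q, hq, p, hp, rfl⟩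
  rintro r ⟨q', -, p', -, rfl⟩
  exact (abs_sub _ _).trans
    (add_le_add (abs_integral_loss_le hbd μ p' q') (abs_integral_loss_le hbd ν p' q'))

theorem Rp_le_Rp_add_disc (hbd : ∀ y y' : Y, 0 ≤ τ y y' ∧ τ y y' ≤ M')
    {H : Set (X → Y)} (μ ν : Measure X) [IsProbabilityMeasure μ] [IsProbabilityMeasure ν]
    {p q : X → Y} (hp : p ∈ H) (hq : q ∈ H) :
    Rp τ p q μ ≤ Rp τ p q ν + disc τ H μ ν := by
  have := (le_abs_self _).trans (abs_integral_sub_le_disc hbd μ ν hp hq)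
  rw [Rp, Rp]
  linarith

theorem Rp_le_Rp_succ_add_disc_add (hbd : ∀ y y' : Y, 0 ≤ τ y y' ∧ τ y y' ≤ M')
    (hsym : ∀ y y' : Y, τ y y' = τ y' y)
    (htri : ∀ y y' y'' : Y, τ y y'' ≤ τ y y' + τ y' y'')
    {H : Set (X → Y)} (hmeas : ∀ p ∈ H, ∀ q ∈ H, Measurable fun x => τ (p x) (q x))
    {μ₀ μ₁ : Measure X} [IsProbabilityMeasure μ₀] [IsProbabilityMeasure μ₁]
    {h g₀ g₁ : X → Y} (hh : h ∈ H) (hg₀ : g₀ ∈ H) (hg₁ : g₁ ∈ H) (f : X → Y) :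
    Rp τ h g₀ μ₀ ≤
      Rp τ h g₁ μ₁ + (disc τ H μ₀ μ₁ + (Rp τ g₀ f μ₀ + Rp τ g₀ g₁ μ₁)) := by
  have hshift := Rp_le_Rp_add_disc hbd μ₀ μ₁ hh hg₀
  have htriangle := Rp_le_Rp_add_Rp_s5 (μ := μ₁) hsym htri (integrable_loss hbd (hmeas h hh g₀ hg₀))
    (integrable_loss hbd (hmeas h hh g₁ hg₁)) (integrable_loss hbd (hmeas g₀ hg₀ g₁ hg₁))
  have hσ := Rp_nonneg_s5 (fun y y' => (hbd y y').1) g₀ f μ₀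
  linarith

end Loss

theorem mixture_le_single_general {X Y : Type*} [MeasurableSpace X]
    (τ : Y → Y → ℝ) (M' : ℝ)
    (hbd : ∀ y y' : Y, 0 ≤ τ y y' ∧ τ y y' ≤ M')
    (hsym : ∀ y y' : Y, τ y y' = τ y' y)
    (htri : ∀ y y' y'' : Y, τ y y'' ≤ τ y y' + τ y' y'')
    (H : Set (X → Y))
    (t : ℕ)
    (μ : ℕ → ℕ → Measure X)
    (hprob : ∀ i ∈ Finset.Icc 1 t, ∀ k ≤ t - i + 1, IsProbabilityMeasure (μ i k))
    (f : ℕ → ℕ → X → Y) (hc : ℕ → ℕ → X → Y)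
    (hcH : ∀ i ∈ Finset.Icc 1 t, ∀ k ≤ t - i + 1, hc i k ∈ H)
    (hMeas : ∀ p q : X → Y,
      (p ∈ H ∨ ∃ i k, p = f i k) → (q ∈ H ∨ ∃ i k, q = f i k) →
      Measurable fun x => τ (p x) (q x))
    (m : ℕ → ℕ) (hm : ∀ i ∈ Finset.Icc 1 t, 1 ≤ m i ∧ m i ≤ t - i + 1)
    (h : X → Y) (hhH : h ∈ H) :
    ∑ i ∈ Finset.Icc 1 t,
        (Rp τ h (hc i (m i)) (μ i (m i)) +
          ∑ k ∈ Finset.range (m i),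
            (disc τ H (μ i k) (μ i (k + 1)) +
              (Rp τ (hc i k) (f i k) (μ i k) +
                Rp τ (hc i k) (hc i (k + 1)) (μ i (k + 1))))) ≤
      ∑ i ∈ Finset.Icc 1 t,
        (Rp τ h (hc i (t - i + 1)) (μ i (t - i + 1)) +
          ∑ k ∈ Finset.range (t - i + 1),
            (disc τ H (μ i k) (μ i (k + 1)) +
              (Rp τ (hc i k) (f i k) (μ i k) +
                Rp τ (hc i k) (hc i (k + 1)) (μ i (k + 1))))) := by
  refine sum_le_sum fun i hi => ?_
  refine add_sum_range_le_of_le_add (fun k => Rp τ h (hc i k) (μ i k))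
    (fun k => disc τ H (μ i k) (μ i (k + 1)) +
      (Rp τ (hc i k) (f i k) (μ i k) + Rp τ (hc i k) (hc i (k + 1)) (μ i (k + 1))))
    (fun k hk => ?_) (hm i hi).2
  have := hprob i hi k hk.le
  have := hprob i hi (k + 1) hk
  exact Rp_le_Rp_succ_add_disc_add hbd hsym htri
    (fun p hp q hq => hMeas p q (.inl hp) (.inl hq)) hhH (hcH i hi k hk.le) (hcH i hi (k + 1) hk) _

/-- the mixture-model risk bound `R_mixture` (obtained by truncating
each task's refinement chain at `m i`) never exceeds the single-model risk bound
`R_single` (the full chains of length `t - i + 1`). -/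
theorem mixture_le_single {X Y : Type*} [MeasurableSpace X]
    (τ : Y → Y → ℝ) (M' : ℝ) (hM : 0 < M')
    (hbd : ∀ y y' : Y, 0 ≤ τ y y' ∧ τ y y' ≤ M')
    (hsym : ∀ y y' : Y, τ y y' = τ y' y)
    (htri : ∀ y y' y'' : Y, τ y y'' ≤ τ y y' + τ y' y'')
    (H : Set (X → Y)) (hH : H.Nonempty)
    (t : ℕ) (ht : 1 ≤ t)
    (μ : ℕ → ℕ → Measure X)
    (hprob : ∀ i ∈ Finset.Icc 1 t, ∀ k ≤ t - i + 1, IsProbabilityMeasure (μ i k))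
    (f : ℕ → ℕ → X → Y) (hc : ℕ → ℕ → X → Y)
    (hcH : ∀ i ∈ Finset.Icc 1 t, ∀ k ≤ t - i + 1, hc i k ∈ H)
    (hMeas : ∀ p q : X → Y,
      (p ∈ H ∨ ∃ i k, p = f i k) → (q ∈ H ∨ ∃ i k, q = f i k) →
      Measurable fun x => τ (p x) (q x))
    (m : ℕ → ℕ) (hm : ∀ i ∈ Finset.Icc 1 t, 1 ≤ m i ∧ m i ≤ t - i + 1)
    (h : X → Y) (hhH : h ∈ H) :
    ∑ i ∈ Finset.Icc 1 t,
        (Rp τ h (hc i (m i)) (μ i (m i)) +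
          ∑ k ∈ Finset.range (m i),
            (disc τ H (μ i k) (μ i (k + 1)) +
              (Rp τ (hc i k) (f i k) (μ i k) +
                Rp τ (hc i k) (hc i (k + 1)) (μ i (k + 1))))) ≤
      ∑ i ∈ Finset.Icc 1 t,
        (Rp τ h (hc i (t - i + 1)) (μ i (t - i + 1)) +
          ∑ k ∈ Finset.range (t - i + 1),
            (disc τ H (μ i k) (μ i (k + 1)) +
              (Rp τ (hc i k) (f i k) (μ i k) +
                Rp τ (hc i k) (hc i (k + 1)) (μ i (k + 1))))) :=
  mixture_le_single_general τ M' hbd hsym htri H t μ hprob f hc hcH hMeas m hm h hhH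
end
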